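/- arXiv:math/0203156 — 3 statements merged into one kernel-verified Lean document; each statement's English description precedes it below -/
import Mathlib

section
/- Let Ω be a bounded hyperconvex domain in ℂⁿ with fixed distinct poles w₁,…,w_k ∈ Ω, fixed weights ν ∈ (ℝ⁺)^k, and let P = {μ ∈ (ℝ⁺)^k : g_ν = g_μ + g_{ν−μ}}, where g_λ denotes the pluricomplex Green function with pole w_j of weight λ_j. Then P is a convex subset of (ℝ⁺)^k. -/
open Complex Metric Set Filter Topology

noncomputable section

/-- Extended logarithm, taking the value `-∞` at `0` (and on nonpositive reals). -/
def elog (x : ℝ) : EReal := if x ≤ 0 then (⊥ : EReal) else ((Real.log x : ℝ) : EReal)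

variable {E : Type*} [NormedAddCommGroup E] [NormedSpace ℂ E]

/-- `u : E → [-∞, ∞)` is plurisubharmonic on `Ω`: it is upper semicontinuous on `Ω`,
not identically `-∞`, and its restriction to every complex line is subharmonic, expressed
via the harmonic-majorant property on closed discs (majorants being real parts of
holomorphic functions). -/
def PlurisubharmonicOn (Ω : Set E) (u : E → EReal) : Prop :=
  UpperSemicontinuousOn u Ω ∧ (∃ z ∈ Ω, u z ≠ ⊥) ∧
    ∀ a b : E, ∀ r : ℝ, 0 < r →
      (∀ ζ : ℂ, ‖ζ‖ ≤ r → a + ζ • b ∈ Ω) →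
      ∀ F : ℂ → ℂ, DifferentiableOn ℂ F (Metric.closedBall 0 r) →
        (∀ ζ : ℂ, ‖ζ‖ = r → u (a + ζ • b) ≤ ((F ζ).re : EReal)) →
        ∀ ζ : ℂ, ‖ζ‖ ≤ r → u (a + ζ • b) ≤ ((F ζ).re : EReal)

/-- `u` is negative plurisubharmonic on `Ω`. -/
def NegPSH (Ω : Set E) (u : E → EReal) : Prop :=
  PlurisubharmonicOn Ω u ∧ ∀ z ∈ Ω, u z ≤ 0

/-- `u` is an extremal point of the convex cone of negative plurisubharmonic
functions on `Ω`: any decomposition `u = u₁ + u₂` within the cone has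
`u₁ = c₁ u` and `u₂ = c₂ u` with `c₁, c₂ ≥ 0`. -/
def ExtremalIn (Ω : Set E) (u : E → EReal) : Prop :=
  ∀ u₁ u₂ : E → EReal, NegPSH Ω u₁ → NegPSH Ω u₂ →
    (∀ z ∈ Ω, u z = u₁ z + u₂ z) →
    ∃ c₁ c₂ : ℝ, 0 ≤ c₁ ∧ 0 ≤ c₂ ∧ (∀ z ∈ Ω, u₁ z = (c₁ : EReal) * u z) ∧
      (∀ z ∈ Ω, u₂ z = (c₂ : EReal) * u z)

/-- The defining family for the pluricomplex Green function of `Ω` with poles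
`w 0, …, w (k-1)` and weights `ν 0, …, ν (k-1)`: negative plurisubharmonic functions with
`u(ζ) - ν j · log‖ζ - w j‖` bounded above near each pole `w j`. -/
def greenFamily (Ω : Set E) (k : ℕ) (w : ℕ → E) (ν : ℕ → ℝ) : Set (E → EReal) :=
  {u | PlurisubharmonicOn Ω u ∧ (∀ z ∈ Ω, u z ≤ 0) ∧
    ∀ j < k, ∃ C : ℝ, ∃ ε > 0, ∀ ζ ∈ Ω, ζ ≠ w j → ‖ζ - w j‖ < ε →
      u ζ ≤ ((ν j * Real.log ‖ζ - w j‖ + C : ℝ) : EReal)}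

/-- The pluricomplex Green function of `Ω` with poles `w 0, …, w (k-1)` and weights
`ν 0, …, ν (k-1)`. -/
def green (Ω : Set E) (k : ℕ) (w : ℕ → E) (ν : ℕ → ℝ) (z : E) : EReal :=
  sSup ((fun u => u z) '' greenFamily Ω k w ν)

/-- `Ω` is hyperconvex: it carries a continuous negative plurisubharmonic exhaustion
function `ρ`, i.e. `{ρ < -ε}` is relatively compact in `Ω` for every `ε > 0`. -/
def Hyperconvex (Ω : Set E) : Prop :=
  ∃ ρ : E → ℝ, ContinuousOn ρ Ω ∧
    PlurisubharmonicOn Ω (fun z => ((ρ z : ℝ) : EReal)) ∧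
    (∀ z ∈ Ω, ρ z < 0) ∧
    ∀ ε : ℝ, 0 < ε →
      IsCompact (closure {z ∈ Ω | ρ z < -ε}) ∧ closure {z ∈ Ω | ρ z < -ε} ⊆ Ω

/-!
For each `z ∈ Ω` the weight map `λ ↦ g_λ(z)` is superadditive, `g_λ + g_λ' ≤ g_{λ+λ'}`, since the
sum of competitors for `g_λ` and `g_λ'` competes for `g_{λ+λ'}`, and positively superhomogeneous,
`t g_λ ≤ g_{tλ}`, since `t u` competes for `g_{tλ}`. For any such function `G` with values in
`[-∞, ∞)` the set `{μ : G ν = G μ + G (ν - μ)}` is convex: if `m = aμ + bμ'` is a convex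
combination, `G ν = a (G μ + G (ν - μ)) + b (G μ' + G (ν - μ')) ≤ G m + G (ν - m)`, and the reverse
inequality is superadditivity.

The analytic input is that a sum of negative plurisubharmonic functions is plurisubharmonic, i.e.
that the majorant property on discs passes to sums.
-/

section Semicontinuity

variable {α : Type*} [MetricSpace α] {S : Set α} {f g : α → ℝ}

theorem IsCompact.exists_pos_forall_dist_lt_imp_lt_add (hS : IsCompact S)
    (hf : UpperSemicontinuousOn f S) (hg : LowerSemicontinuousOn g S)
    (hfg : ∀ x ∈ S, f x ≤ g x) {ε : ℝ} (hε : 0 < ε) :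
    ∃ δ > 0, ∀ x ∈ S, ∀ y ∈ S, dist x y < δ → f x < g y + ε := by
  have hlocal : ∀ x ∈ S, ∃ W : Set α, IsOpen W ∧ x ∈ W ∧
      ∀ z ∈ W ∩ S, f z < f x + ε / 2 ∧ g x - ε / 2 < g z := by
    intro x hx
    obtain ⟨W, hWo, hxW, hW⟩ := mem_nhdsWithin.1
      (inter_mem (hf x hx (f x + ε / 2) (by linarith)) (hg x hx (g x - ε / 2) (by linarith)))
    exact ⟨W, hWo, hxW, fun z hz => hW ⟨hz.1, hz.2⟩⟩
  choose! W hWo hxW hW using hlocal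
  obtain ⟨δ, hδ, hball⟩ := lebesgue_number_lemma_of_metric hS (fun i : S => hWo i i.2)
    fun x hx => mem_iUnion.2 ⟨⟨x, hx⟩, hxW x hx⟩
  refine ⟨δ, hδ, fun x hx y hy hxy => ?_⟩
  obtain ⟨i, hi⟩ := hball x hx
  have hfx := (hW i i.2 x ⟨hi (mem_ball_self hδ), hx⟩).1
  have hgy := (hW i i.2 y ⟨hi (by rwa [mem_ball, dist_comm]), hy⟩).2
  linarith [hfg i i.2]

theorem IsCompact.exists_continuous_le_le_add (hS : IsCompact S)
    (hf : UpperSemicontinuousOn f S) (hg : LowerSemicontinuousOn g S)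
    (hfg : ∀ x ∈ S, f x ≤ g x) {ε : ℝ} (hε : 0 < ε) :
    ∃ φ : α → ℝ, Continuous φ ∧ (∀ x ∈ S, f x ≤ φ x) ∧ ∀ x ∈ S, φ x ≤ g x + ε := by
  rcases S.eq_empty_or_nonempty with rfl | hne
  · exact ⟨0, continuous_const, by simp, by simp⟩
  have : Nonempty S := hne.to_subtype
  obtain ⟨δ, hδ, hsep⟩ := hS.exists_pos_forall_dist_lt_imp_lt_add hf hg hfg hε
  obtain ⟨xM, -, hM⟩ := hf.exists_isMaxOn hne hS
  obtain ⟨xm, -, hm⟩ := hg.exists_isMinOn hne hS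
  set C : ℝ := max 0 ((f xM - g xm) / δ)
  have hC : 0 ≤ C := le_max_left _ _
  have hCδ : f xM - g xm ≤ C * δ := (div_le_iff₀ hδ).1 (le_max_right _ _)
  -- inf-convolution of `g + ε` with `C * dist`: it is `C`-Lipschitz, and `C` is so large that
  -- only the points `y` within `δ` of `x` compete for the infimum against `f x`
  set φ : α → ℝ := fun x => ⨅ y : S, g y + ε + C * dist x y
  have hbdd : ∀ x : α, BddBelow (range fun y : S => g y + ε + C * dist x y) := fun x =>
    ⟨g xm + ε, by
      rintro _ ⟨y, rfl⟩
      nlinarith [isMinOn_iff.1 hm y y.2, dist_nonneg (x := x) (y := y)]⟩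
  have hφle : ∀ x, ∀ y ∈ S, φ x ≤ g y + ε + C * dist x y := fun x y hy =>
    ciInf_le (hbdd x) ⟨y, hy⟩
  refine ⟨φ, (LipschitzWith.of_le_add_mul' C fun x x' => ?_).continuous,
    fun x hx => le_ciInf fun y => ?_, fun x hx => by simpa using hφle x x hx⟩
  · rw [← sub_le_iff_le_add]
    refine le_ciInf fun y => ?_
    have := hφle x y y.2
    have := dist_triangle x x' y
    nlinarith
  · by_cases hxy : dist x y < δ
    · linarith [hsep x hx y y.2 hxy, mul_nonneg hC (dist_nonneg (x := x) (y := (y : α)))]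
    · have : C * δ ≤ C * dist x y := mul_le_mul_of_nonneg_left (not_lt.1 hxy) hC
      linarith [isMaxOn_iff.1 hM x hx, isMinOn_iff.1 hm y y.2]

end Semicontinuity

section LaurentApproximation

theorem Complex.conj_eq_sq_mul_inv_of_norm_eq {z : ℂ} {r : ℝ} (hz : ‖z‖ = r) :
    (starRingEnd ℂ) z = (r : ℂ) ^ 2 * z⁻¹ := by
  rcases eq_or_ne z 0 with rfl | hz0
  · simp
  rw [← hz, ← Complex.mul_conj', mul_comm z, mul_assoc, mul_inv_cancel₀ hz0, mul_one]

variable {r : ℝ}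

def reMonomial (hr : 0 < r) (c : ℂ) (n : ℤ) : C(sphere (0 : ℂ) r, ℝ) :=
  ⟨fun z => (c * (z : ℂ) ^ n).re, Complex.continuous_re.comp <| continuous_const.mul <|
    continuous_iff_continuousAt.2 fun z =>
      (continuousAt_zpow₀ _ _ (Or.inl (ne_zero_of_mem_sphere hr.ne' z))).comp
        continuous_subtype_val.continuousAt⟩

theorem reMonomial_apply (hr : 0 < r) (c : ℂ) (n : ℤ) (z : sphere (0 : ℂ) r) :
    reMonomial hr c n z = (c * (z : ℂ) ^ n).re := rfl

-- `Re u * Re v = (Re (u v) + Re (u v̄)) / 2`, and `z̄ = r² / z` on the circle.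
theorem reMonomial_mul (hr : 0 < r) (c d : ℂ) (n m : ℤ) :
    reMonomial hr c n * reMonomial hr d m =
      (1 / 2 : ℝ) • reMonomial hr (c * d) (n + m) +
        (1 / 2 : ℝ) • reMonomial hr (c * (starRingEnd ℂ) d * ((r : ℂ) ^ (2 : ℕ)) ^ m) (n - m) := by
  ext z
  have hz0 : (z : ℂ) ≠ 0 := ne_zero_of_mem_sphere hr.ne' z
  have hconj : (starRingEnd ℂ) ((z : ℂ) ^ m) = ((r : ℂ) ^ (2 : ℕ)) ^ m * ((z : ℂ) ^ m)⁻¹ := by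
    rw [map_zpow₀, Complex.conj_eq_sq_mul_inv_of_norm_eq (mem_sphere_zero_iff_norm.1 z.2),
      mul_zpow, inv_zpow]
  simp only [ContinuousMap.mul_apply, ContinuousMap.add_apply, ContinuousMap.smul_apply,
    reMonomial_apply, smul_eq_mul, zpow_add₀ hz0, zpow_sub₀ hz0]
  have re_mul_re : ∀ u v : ℂ,
      u.re * v.re = 1 / 2 * (u * v).re + 1 / 2 * (u * (starRingEnd ℂ) v).re := by
    intro u v
    simp only [Complex.mul_re, Complex.conj_re, Complex.conj_im]
    ring
  rw [re_mul_re, map_mul, hconj]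
  ring_nf

def reLaurent (hr : 0 < r) : Submodule ℝ C(sphere (0 : ℂ) r, ℝ) :=
  Submodule.span ℝ (range fun p : ℂ × ℤ => reMonomial hr p.1 p.2)

theorem reMonomial_mem_reLaurent (hr : 0 < r) (c : ℂ) (n : ℤ) : reMonomial hr c n ∈ reLaurent hr :=
  Submodule.subset_span ⟨(c, n), rfl⟩

theorem one_mem_reLaurent (hr : 0 < r) : (1 : C(sphere (0 : ℂ) r, ℝ)) ∈ reLaurent hr := by
  convert reMonomial_mem_reLaurent hr 1 0
  ext z
  simp [reMonomial_apply]

theorem mul_mem_reLaurent (hr : 0 < r) {f g : C(sphere (0 : ℂ) r, ℝ)} (hf : f ∈ reLaurent hr)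
    (hg : g ∈ reLaurent hr) : f * g ∈ reLaurent hr := by
  refine (show reLaurent hr * reLaurent hr ≤ reLaurent hr from ?_) (Submodule.mul_mem_mul hf hg)
  rw [reLaurent, Submodule.span_mul_span, Submodule.span_le]
  rintro _ ⟨_, ⟨⟨c, n⟩, rfl⟩, _, ⟨⟨d, m⟩, rfl⟩, rfl⟩
  change reMonomial hr c n * reMonomial hr d m ∈ _
  rw [reMonomial_mul]
  exact add_mem (Submodule.smul_mem _ _ (reMonomial_mem_reLaurent hr _ _))
    (Submodule.smul_mem _ _ (reMonomial_mem_reLaurent hr _ _))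

def reLaurentAlgebra (hr : 0 < r) : Subalgebra ℝ C(sphere (0 : ℂ) r, ℝ) :=
  (reLaurent hr).toSubalgebra (one_mem_reLaurent hr) fun _ _ => mul_mem_reLaurent hr

theorem reLaurentAlgebra_separatesPoints (hr : 0 < r) : (reLaurentAlgebra hr).SeparatesPoints := by
  intro z z' hzz'
  have hne : (z : ℂ) ≠ z' := fun h => hzz' (Subtype.ext h)
  by_cases hre : (z : ℂ).re = (z' : ℂ).re
  · refine ⟨reMonomial hr (-Complex.I) 1, ⟨_, reMonomial_mem_reLaurent hr _ _, rfl⟩, ?_⟩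
    simp only [reMonomial_apply, zpow_one]
    intro h
    exact hne (Complex.ext hre (by simpa using h))
  · refine ⟨reMonomial hr 1 1, ⟨_, reMonomial_mem_reLaurent hr _ _, rfl⟩, ?_⟩
    simpa [reMonomial_apply] using hre

-- negative powers are folded back through `Re w = Re w̄` and `z̄ = r² / z`
theorem exists_re_eq_of_mem_reLaurent (hr : 0 < r) {g : C(sphere (0 : ℂ) r, ℝ)}
    (hg : g ∈ reLaurent hr) :
    ∃ Q : ℂ → ℂ, Differentiable ℂ Q ∧ ∀ z : sphere (0 : ℂ) r, g z = (Q z).re := by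
  induction hg using Submodule.span_induction with
  | mem f hf =>
    obtain ⟨⟨c, n⟩, rfl⟩ := hf
    rcases le_or_gt 0 n with hn | hn
    · refine ⟨fun w => c * w ^ n.toNat, (differentiable_const c).mul (differentiable_pow _),
        fun z => ?_⟩
      change (c * (z : ℂ) ^ n).re = (c * (z : ℂ) ^ n.toNat).re
      rw [← zpow_natCast, Int.toNat_of_nonneg hn]
    · refine ⟨fun w => (starRingEnd ℂ) c * ((r : ℂ) ^ (2 : ℕ)) ^ n * w ^ (-n).toNat,
        (differentiable_const _).mul (differentiable_pow _), fun z => ?_⟩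
      change (c * (z : ℂ) ^ n).re
        = ((starRingEnd ℂ) c * ((r : ℂ) ^ (2 : ℕ)) ^ n * (z : ℂ) ^ (-n).toNat).re
      rw [← Complex.conj_re, ← zpow_natCast (z : ℂ), Int.toNat_of_nonneg (by omega), map_mul,
        map_zpow₀, Complex.conj_eq_sq_mul_inv_of_norm_eq (mem_sphere_zero_iff_norm.1 z.2),
        mul_zpow, inv_zpow, ← zpow_neg]
      ring_nf
  | zero => exact ⟨0, differentiable_const 0, fun z => by simp⟩
  | add f₁ f₂ _ _ h₁ h₂ =>
    obtain ⟨Q₁, hQ₁, he₁⟩ := h₁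
    obtain ⟨Q₂, hQ₂, he₂⟩ := h₂
    exact ⟨Q₁ + Q₂, hQ₁.add hQ₂, fun z => by simp [he₁ z, he₂ z]⟩
  | smul t f _ h =>
    obtain ⟨Q, hQ, he⟩ := h
    exact ⟨fun w => (t : ℂ) * Q w, (differentiable_const _).mul hQ, fun z => by simp [he z]⟩

theorem exists_differentiable_abs_sub_re_le_of_continuous (hr : 0 < r) {φ : ℂ → ℝ}
    (hφ : Continuous φ) {ε : ℝ} (hε : 0 < ε) :
    ∃ Q : ℂ → ℂ, Differentiable ℂ Q ∧ ∀ z ∈ sphere (0 : ℂ) r, |φ z - (Q z).re| ≤ ε := by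
  obtain ⟨g, hg⟩ := ContinuousMap.exists_mem_subalgebra_near_continuous_of_separatesPoints _
    (reLaurentAlgebra_separatesPoints hr) (fun z : sphere (0 : ℂ) r => φ z)
    (hφ.comp continuous_subtype_val) ε hε
  obtain ⟨Q, hQ, he⟩ := exists_re_eq_of_mem_reLaurent hr g.2
  refine ⟨Q, hQ, fun z hz => ?_⟩
  have := hg ⟨z, hz⟩
  rw [he, Real.norm_eq_abs, abs_sub_comm] at this
  exact this.le

end LaurentApproximation

section Clamp

def clampToReal (c : ℝ) (x : EReal) : ℝ := ((x ⊔ ((-c : ℝ) : EReal)) ⊓ 0).toReal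

variable {c : ℝ} {x y : EReal}

theorem sup_inf_zero_ne_bot_ne_top (c : ℝ) (x : EReal) :
    (x ⊔ ((-c : ℝ) : EReal)) ⊓ 0 ≠ ⊥ ∧ (x ⊔ ((-c : ℝ) : EReal)) ⊓ 0 ≠ ⊤ := by
  refine ⟨ne_bot_of_le_ne_bot (EReal.coe_ne_bot (min (-c) 0)) ?_,
    ne_top_of_le_ne_top EReal.zero_ne_top inf_le_right⟩
  exact le_inf (le_sup_of_le_right (by exact_mod_cast min_le_left _ _))
    (by exact_mod_cast min_le_right _ _)

theorem coe_clampToReal (c : ℝ) (x : EReal) :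
    (clampToReal c x : EReal) = (x ⊔ ((-c : ℝ) : EReal)) ⊓ 0 :=
  EReal.coe_toReal (sup_inf_zero_ne_bot_ne_top c x).2 (sup_inf_zero_ne_bot_ne_top c x).1

theorem monotone_clampToReal (c : ℝ) : Monotone (clampToReal c) := fun x y hxy => by
  have : (clampToReal c x : EReal) ≤ clampToReal c y := by
    rw [coe_clampToReal, coe_clampToReal]
    gcongr
  exact_mod_cast this

theorem continuous_clampToReal (c : ℝ) : Continuous (clampToReal c) :=
  EReal.continuousOn_toReal.comp_continuous ((continuous_id.max continuous_const).min
    continuous_const) fun x => by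
      simpa only [mem_compl_iff, mem_insert_iff, mem_singleton_iff, not_or] using
        sup_inf_zero_ne_bot_ne_top c x

theorem le_clampToReal (hx : x ≤ 0) : x ≤ clampToReal c x := by
  rw [coe_clampToReal]
  exact le_inf le_sup_left hx

theorem clampToReal_nonpos (c : ℝ) (x : EReal) : clampToReal c x ≤ 0 := by
  have : (clampToReal c x : EReal) ≤ (0 : ℝ) := by
    rw [coe_clampToReal]
    exact inf_le_right
  exact_mod_cast this

theorem clampToReal_of_le (hc : 0 ≤ c) (h : x ≤ (-c : ℝ)) : clampToReal c x = -c := by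
  have : (clampToReal c x : EReal) = (-c : ℝ) := by
    rw [coe_clampToReal, sup_eq_right.2 h, inf_eq_left]
    exact_mod_cast neg_nonpos.2 hc
  exact_mod_cast this

theorem coe_clampToReal_of_le_of_le (h₁ : ((-c : ℝ) : EReal) ≤ x) (h₂ : x ≤ 0) :
    (clampToReal c x : EReal) = x := by
  rw [coe_clampToReal, sup_eq_left.2 h₁, inf_eq_left.2 h₂]

theorem clampToReal_add_clampToReal_le {a : ℝ} (hc : 0 ≤ c) (ha : -c ≤ a) (hx : x ≤ 0)
    (hy : y ≤ 0) (hxy : x + y ≤ a) : clampToReal c x + clampToReal c y ≤ a := by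
  rcases le_total x (-c : ℝ) with hxc | hxc
  · linarith [clampToReal_of_le hc hxc, clampToReal_nonpos c y]
  rcases le_total y (-c : ℝ) with hyc | hyc
  · linarith [clampToReal_of_le hc hyc, clampToReal_nonpos c x]
  rw [← coe_clampToReal_of_le_of_le hxc hx, ← coe_clampToReal_of_le_of_le hyc hy] at hxy
  exact_mod_cast hxy

end Clamp

section DiscMajorant

/-- The property that `PlurisubharmonicOn` asks of `ζ ↦ u (a + ζ • b)` on each disc. -/
def HasDiscMajorantProperty (r : ℝ) (U : ℂ → EReal) : Prop :=
  ∀ F : ℂ → ℂ, DifferentiableOn ℂ F (closedBall 0 r) →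
    (∀ ζ : ℂ, ‖ζ‖ = r → U ζ ≤ ((F ζ).re : EReal)) →
      ∀ ζ : ℂ, ‖ζ‖ ≤ r → U ζ ≤ ((F ζ).re : EReal)

variable {r : ℝ} {U V : ℂ → EReal}

theorem HasDiscMajorantProperty.le_re_add (hU : HasDiscMajorantProperty r U) {Q : ℂ → ℂ}
    (hQ : DifferentiableOn ℂ Q (closedBall 0 r)) (c : ℝ)
    (h : ∀ ζ : ℂ, ‖ζ‖ = r → U ζ ≤ (((Q ζ).re + c : ℝ) : EReal)) (ζ : ℂ) (hζ : ‖ζ‖ ≤ r) :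
    U ζ ≤ (((Q ζ).re + c : ℝ) : EReal) := by
  simpa using hU (fun ζ => Q ζ + c) (hQ.add_const _) (by simpa using h) ζ hζ

theorem EReal.coe_mul_le_coe_iff {t : ℝ} (ht : 0 < t) {x : EReal} {y : ℝ} :
    (t : EReal) * x ≤ y ↔ x ≤ (t⁻¹ * y : ℝ) := by
  rw [mul_comm, ← EReal.le_div_iff_mul_le (by exact_mod_cast ht) (EReal.coe_ne_top t),
    ← EReal.coe_div, inv_mul_eq_div]

theorem EReal.le_coe_of_forall_pos_le_coe_add {x : EReal} {a : ℝ}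
    (h : ∀ ε > 0, x ≤ ((a + ε : ℝ) : EReal)) : x ≤ a :=
  EReal.le_of_forall_lt_iff_le.1 fun y hy => by
    have hay : a < y := EReal.coe_lt_coe_iff.1 hy
    simpa using h (y - a) (by linarith)

theorem HasDiscMajorantProperty.const_mul (hU : HasDiscMajorantProperty r U) {t : ℝ}
    (ht : 0 < t) : HasDiscMajorantProperty r fun ζ => (t : EReal) * U ζ := by
  intro F hF hb ζ hζ
  have hre : ∀ z, (((t⁻¹ : ℝ) : ℂ) * F z).re = t⁻¹ * (F z).re := fun z => Complex.re_ofReal_mul _ _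
  rw [EReal.coe_mul_le_coe_iff ht, ← hre]
  refine hU _ (hF.const_mul _) (fun z hz => ?_) ζ hζ
  rw [hre, ← EReal.coe_mul_le_coe_iff ht]
  exact hb z hz

-- Interpose a continuous `φ` between the clamped `U` and `Re F - V` on the circle, approximate
-- it by `Re Q` with `Q` entire, and majorize `U` by `Re Q` and `V` by `Re (F - Q)`.
theorem HasDiscMajorantProperty.add (hr : 0 < r) (hU : HasDiscMajorantProperty r U)
    (hV : HasDiscMajorantProperty r V) (hUsc : UpperSemicontinuousOn U (sphere 0 r))
    (hVsc : UpperSemicontinuousOn V (sphere 0 r)) (hU0 : ∀ ζ ∈ sphere (0 : ℂ) r, U ζ ≤ 0)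
    (hV0 : ∀ ζ ∈ sphere (0 : ℂ) r, V ζ ≤ 0) :
    HasDiscMajorantProperty r fun ζ => U ζ + V ζ := by
  intro F hF hb ζ hζ
  have hFre : ContinuousOn (fun z => (F z).re) (sphere 0 r) :=
    (Complex.continuous_re.comp_continuousOn hF.continuousOn).mono sphere_subset_closedBall
  obtain ⟨m, hm⟩ := (isCompact_sphere (0 : ℂ) r).bddBelow_image hFre
  set Ur : ℂ → ℝ := fun z => clampToReal |m| (U z)
  set Vr : ℂ → ℝ := fun z => clampToReal |m| (V z)
  have hUr : UpperSemicontinuousOn Ur (sphere 0 r) :=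
    (continuous_clampToReal _).comp_upperSemicontinuousOn hUsc (monotone_clampToReal _)
  have hWr : LowerSemicontinuousOn (fun z => (F z).re + -Vr z) (sphere 0 r) :=
    hFre.lowerSemicontinuousOn.add <| (continuous_neg.comp (continuous_clampToReal _)
      ).comp_upperSemicontinuousOn_antitone hVsc (monotone_clampToReal _).neg
  have hsep : ∀ z ∈ sphere (0 : ℂ) r, Ur z ≤ (F z).re + -Vr z := fun z hz => by
    have := clampToReal_add_clampToReal_le (abs_nonneg m)
      ((neg_abs_le m).trans (hm ⟨z, hz, rfl⟩)) (hU0 z hz) (hV0 z hz)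
      (hb z (mem_sphere_zero_iff_norm.1 hz))
    linarith
  refine EReal.le_coe_of_forall_pos_le_coe_add fun ε' hε' => ?_
  obtain ⟨ε, hε, rfl⟩ : ∃ ε > 0, ε' = 3 * ε := ⟨ε' / 3, by positivity, by ring⟩
  obtain ⟨φ, hφ, hUφ, hφV⟩ := (isCompact_sphere (0 : ℂ) r).exists_continuous_le_le_add hUr hWr
    hsep hε
  obtain ⟨Q, hQ, hQφ⟩ := exists_differentiable_abs_sub_re_le_of_continuous hr hφ hε
  have hUQ := hU.le_re_add hQ.differentiableOn ε (fun z hz => by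
    have hz' := mem_sphere_zero_iff_norm.2 hz
    refine (le_clampToReal (c := |m|) (hU0 z hz')).trans (EReal.coe_le_coe_iff.2 ?_)
    change Ur z ≤ _
    linarith [hUφ z hz', (abs_le.1 (hQφ z hz')).2]) ζ hζ
  have hVQ := hV.le_re_add (hF.sub hQ.differentiableOn) (2 * ε) (fun z hz => by
    have hz' := mem_sphere_zero_iff_norm.2 hz
    refine (le_clampToReal (c := |m|) (hV0 z hz')).trans (EReal.coe_le_coe_iff.2 ?_)
    change Vr z ≤ (F z - Q z).re + 2 * ε
    rw [Complex.sub_re]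
    linarith [hφV z hz', (abs_le.1 (hQφ z hz')).1]) ζ hζ
  refine (add_le_add hUQ hVQ).trans ?_
  rw [← EReal.coe_add, EReal.coe_le_coe_iff]
  simp only [Pi.sub_apply, Complex.sub_re]
  linarith

end DiscMajorant

section Plurisubharmonic

variable {Ω : Set E} {u v : E → EReal}

theorem UpperSemicontinuousOn.comp_line (hu : UpperSemicontinuousOn u Ω) {a b : E} {r : ℝ}
    (hmem : ∀ ζ : ℂ, ‖ζ‖ ≤ r → a + ζ • b ∈ Ω) :
    UpperSemicontinuousOn (fun ζ : ℂ => u (a + ζ • b)) (sphere 0 r) :=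
  hu.comp (continuous_const.add (continuous_id.smul continuous_const)).continuousOn
    fun ζ hζ => hmem ζ (mem_sphere_zero_iff_norm.1 hζ).le

theorem PlurisubharmonicOn.hasDiscMajorantProperty (hu : PlurisubharmonicOn Ω u) {a b : E}
    {r : ℝ} (hr : 0 < r) (hmem : ∀ ζ : ℂ, ‖ζ‖ ≤ r → a + ζ • b ∈ Ω) :
    HasDiscMajorantProperty r fun ζ => u (a + ζ • b) :=
  hu.2.2 a b r hr hmem

theorem PlurisubharmonicOn.add (hu : PlurisubharmonicOn Ω u) (hv : PlurisubharmonicOn Ω v)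
    (hu0 : ∀ z ∈ Ω, u z ≤ 0) (hv0 : ∀ z ∈ Ω, v z ≤ 0) (hne : ∃ z ∈ Ω, u z ≠ ⊥ ∧ v z ≠ ⊥) :
    PlurisubharmonicOn Ω fun z => u z + v z := by
  refine ⟨hu.1.add' hv.1 fun z hz => EReal.continuousAt_add
      (Or.inl (ne_top_of_le_ne_top EReal.zero_ne_top (hu0 z hz)))
      (Or.inr (ne_top_of_le_ne_top EReal.zero_ne_top (hv0 z hz))), ?_,
    fun a b r hr hmem => ?_⟩
  · obtain ⟨z, hz, huz, hvz⟩ := hne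
    exact ⟨z, hz, EReal.add_ne_bot_iff.2 ⟨huz, hvz⟩⟩
  · have hsphere : ∀ ζ ∈ sphere (0 : ℂ) r, a + ζ • b ∈ Ω := fun ζ hζ =>
      hmem ζ (mem_sphere_zero_iff_norm.1 hζ).le
    exact (hu.hasDiscMajorantProperty hr hmem).add hr (hv.hasDiscMajorantProperty hr hmem)
      (hu.1.comp_line hmem) (hv.1.comp_line hmem) (fun ζ hζ => hu0 _ (hsphere ζ hζ))
      fun ζ hζ => hv0 _ (hsphere ζ hζ)

theorem PlurisubharmonicOn.const_mul (hu : PlurisubharmonicOn Ω u) {t : ℝ} (ht : 0 < t) :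
    PlurisubharmonicOn Ω fun z => (t : EReal) * u z := by
  have htE : (0 : EReal) < t := EReal.coe_pos.2 ht
  have hcont : Continuous fun x : EReal => (t : EReal) * x :=
    continuous_iff_continuousAt.2 fun x =>
      (EReal.continuousAt_mul (Or.inl htE.ne') (Or.inl htE.ne') (Or.inl (EReal.coe_ne_bot t))
        (Or.inl (EReal.coe_ne_top t))).comp (continuousAt_const.prodMk continuousAt_id)
  refine ⟨hcont.comp_upperSemicontinuousOn hu.1 fun x y hxy =>
      mul_le_mul_of_nonneg_left hxy htE.le, ?_, fun a b r hr hmem =>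
    (hu.hasDiscMajorantProperty hr hmem).const_mul ht⟩
  obtain ⟨z, hz, huz⟩ := hu.2.1
  exact ⟨z, hz, (EReal.mul_ne_bot _ _).2 ⟨Or.inl (EReal.coe_ne_bot t), Or.inr huz,
    Or.inl (EReal.coe_ne_top t), Or.inl htE.le⟩⟩

end Plurisubharmonic

section Green

variable {Ω : Set E} {k : ℕ} {w : ℕ → E} {lam lam₁ lam₂ : ℕ → ℝ} {u v : E → EReal} {z : E}

theorem add_mem_greenFamily (hu : u ∈ greenFamily Ω k w lam₁) (hv : v ∈ greenFamily Ω k w lam₂)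
    (hne : ∃ z ∈ Ω, u z ≠ ⊥ ∧ v z ≠ ⊥) :
    (fun z => u z + v z) ∈ greenFamily Ω k w (lam₁ + lam₂) := by
  obtain ⟨hupsh, hu0, hupole⟩ := hu
  obtain ⟨hvpsh, hv0, hvpole⟩ := hv
  refine ⟨hupsh.add hvpsh hu0 hv0 hne, fun z hz => by simpa using add_le_add (hu0 z hz) (hv0 z hz),
    fun j hj => ?_⟩
  obtain ⟨C₁, ε₁, hε₁, h₁⟩ := hupole j hj
  obtain ⟨C₂, ε₂, hε₂, h₂⟩ := hvpole j hj
  refine ⟨C₁ + C₂, min ε₁ ε₂, lt_min hε₁ hε₂, fun ζ hζ hne hd => ?_⟩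
  refine (add_le_add (h₁ ζ hζ hne (hd.trans_le (min_le_left _ _)))
    (h₂ ζ hζ hne (hd.trans_le (min_le_right _ _)))).trans_eq ?_
  rw [← EReal.coe_add, Pi.add_apply]
  ring_nf

theorem const_mul_mem_greenFamily (hu : u ∈ greenFamily Ω k w lam) {t : ℝ} (ht : 0 < t) :
    (fun z => (t : EReal) * u z) ∈ greenFamily Ω k w (t • lam) := by
  obtain ⟨hupsh, hu0, hupole⟩ := hu
  have htE : (0 : EReal) ≤ t := EReal.coe_nonneg.2 ht.le
  refine ⟨hupsh.const_mul ht, fun z hz => by simpa using mul_le_mul_of_nonneg_left (hu0 z hz) htE,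
    fun j hj => ?_⟩
  obtain ⟨C, ε, hε, h⟩ := hupole j hj
  refine ⟨t * C, ε, hε, fun ζ hζ hne hd => ?_⟩
  refine (mul_le_mul_of_nonneg_left (h ζ hζ hne hd) htE).trans_eq ?_
  rw [← EReal.coe_mul, Pi.smul_apply, smul_eq_mul]
  ring_nf

theorem green_le_zero (hz : z ∈ Ω) : green Ω k w lam z ≤ 0 :=
  sSup_le fun _ ⟨_, hu, hx⟩ => hx ▸ hu.2.1 z hz

theorem le_green (hu : u ∈ greenFamily Ω k w lam) : u z ≤ green Ω k w lam z :=
  le_sSup ⟨u, hu, rfl⟩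

theorem green_add_green_le (hz : z ∈ Ω) :
    green Ω k w lam₁ z + green Ω k w lam₂ z ≤ green Ω k w (lam₁ + lam₂) z := by
  refine EReal.add_le_of_forall_lt fun a ha b hb => ?_
  obtain ⟨_, ⟨u, hu, rfl⟩, hau⟩ := lt_sSup_iff.1 ha
  obtain ⟨_, ⟨v, hv, rfl⟩, hbv⟩ := lt_sSup_iff.1 hb
  exact (add_le_add hau.le hbv.le).trans
    (le_green (add_mem_greenFamily hu hv ⟨z, hz, hau.ne_bot, hbv.ne_bot⟩))

theorem coe_mul_green_le {t : ℝ} (ht : 0 < t) :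
    (t : EReal) * green Ω k w lam z ≤ green Ω k w (t • lam) z := by
  have htE : (0 : EReal) < t := EReal.coe_pos.2 ht
  rw [mul_comm, ← EReal.le_div_iff_mul_le htE (EReal.coe_ne_top t)]
  refine sSup_le fun _ ⟨u, hu, hx⟩ => ?_
  rw [← hx, EReal.le_div_iff_mul_le htE (EReal.coe_ne_top t), mul_comm]
  exact le_green (const_mul_mem_greenFamily hu ht)

end Green

theorem convex_setOf_eq_add_sub {V : Type*} [AddCommGroup V] [Module ℝ V] {G : V → EReal}
    (hG : ∀ x, G x ≠ ⊤) (hadd : ∀ x y, G x + G y ≤ G (x + y))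
    (hsmul : ∀ t : ℝ, 0 < t → ∀ x, (t : EReal) * G x ≤ G (t • x)) (ν : V) :
    Convex ℝ {μ | G ν = G μ + G (ν - μ)} := by
  refine convex_iff_forall_pos.2 fun μ hμ μ' hμ' a b ha hb hab => ?_
  have hconcave : ∀ x y, (a : EReal) * G x + b * G y ≤ G (a • x + b • y) := fun x y =>
    (add_le_add (hsmul a ha x) (hsmul b hb y)).trans (hadd _ _)
  have hsub : ν - (a • μ + b • μ') = a • (ν - μ) + b • (ν - μ') := by
    linear_combination (norm := module) (-hab) • ν
  refine le_antisymm ?_ (by simpa using hadd (a • μ + b • μ') (ν - (a • μ + b • μ')))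
  rw [hsub]
  refine le_trans ?_ (add_le_add (hconcave μ μ') (hconcave (ν - μ) (ν - μ')))
  rcases eq_or_ne (G ν) ⊥ with hbot | hν
  · simp [hbot]
  have hfin : ∀ x y, G ν = G x + G y → G x ≠ ⊥ ∧ G y ≠ ⊥ := fun x y h =>
    EReal.add_ne_bot_iff.1 (h ▸ hν)
  obtain ⟨h₁, h₂⟩ := hfin _ _ hμ
  obtain ⟨h₃, h₄⟩ := hfin _ _ hμ'
  simp only [Set.mem_ofPred_eq] at hμ hμ'
  lift G μ to ℝ using ⟨hG _, h₁⟩ with x₁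
  lift G (ν - μ) to ℝ using ⟨hG _, h₂⟩ with x₂
  lift G μ' to ℝ using ⟨hG _, h₃⟩ with y₁
  lift G (ν - μ') to ℝ using ⟨hG _, h₄⟩ with y₂
  rw [hμ] at hμ' ⊢
  norm_cast at hμ' ⊢
  linear_combination (-(x₁ + x₂)) * hab + b * hμ'

theorem statement6_general (n k : ℕ) (Ω : Set (EuclideanSpace ℂ (Fin n)))
    (w : ℕ → EuclideanSpace ℂ (Fin n)) (ν : ℕ → ℝ) :
    Convex ℝ {μ : ℕ → ℝ | (∀ j < k, 0 ≤ μ j) ∧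
      ∀ z ∈ Ω, green Ω k w ν z = green Ω k w μ z + green Ω k w (fun j => ν j - μ j) z} := by
  have hnonneg : Convex ℝ {μ : ℕ → ℝ | ∀ j < k, 0 ≤ μ j} := fun μ hμ μ' hμ' a b ha hb _ j hj =>
    add_nonneg (mul_nonneg ha (hμ j hj)) (mul_nonneg hb (hμ' j hj))
  have hsplit : ∀ z ∈ Ω,
      Convex ℝ {μ : ℕ → ℝ | green Ω k w ν z = green Ω k w μ z + green Ω k w (ν - μ) z} :=
    fun z hz => convex_setOf_eq_add_sub (G := fun lam => green Ω k w lam z)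
      (fun _ => ne_top_of_le_ne_top EReal.zero_ne_top (green_le_zero hz))
      (fun _ _ => green_add_green_le hz) (fun _ ht _ => coe_mul_green_le ht) ν
  intro μ hμ μ' hμ' a b ha hb hab
  exact ⟨hnonneg hμ.1 hμ'.1 ha hb hab, fun z hz => hsplit z hz (hμ.2 z hz) (hμ'.2 z hz) ha hb hab⟩

/-- For a bounded hyperconvex domain `Ω ⊆ ℂⁿ` with fixed distinct poles `w₁, …, w_k` and
fixed weights `ν ∈ (ℝ⁺)^k`, the set `P = {μ ∈ (ℝ⁺)^k : g_ν = g_μ + g_{ν-μ}}` is convex. -/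
theorem statement6 (n k : ℕ) (Ω : Set (EuclideanSpace ℂ (Fin n)))
    (hopen : IsOpen Ω) (hconn : IsConnected Ω) (hbdd : Bornology.IsBounded Ω)
    (hhyp : Hyperconvex Ω)
    (w : ℕ → EuclideanSpace ℂ (Fin n)) (hw : ∀ j < k, w j ∈ Ω)
    (hinj : ∀ i < k, ∀ j < k, w i = w j → i = j)
    (ν : ℕ → ℝ) (hν : ∀ j < k, 0 ≤ ν j) :
    Convex ℝ {μ : ℕ → ℝ | (∀ j < k, 0 ≤ μ j) ∧
      ∀ z ∈ Ω, green Ω k w ν z = green Ω k w μ z + green Ω k w (fun j => ν j - μ j) z} :=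
  statement6_general n k Ω w ν
end
end

section
/- Let D×D be the bidisk in ℂ², let a, b ∈ D be distinct and nonzero, and let z = (0, γ) with |ab| < |γ| < min{|a|, |b|}. Write δ_{1,1}(z) for the Lempert function with poles (a,0), (b,0) both of weight 1, and δ_{1,0}(z) for the Lempert function with the single pole (a,0) of weight 1. Then there is no holomorphic disc f: D → D×D with f(0) = z that simultaneously attains the infimum defining δ_{1,1}(z) and the infimum defining δ_{1,0}(z). -/
/-! The first coordinate of a disc through `(0, γ)` hitting `(a, 0)` at `ζ` satisfies
`|a| ≤ |ζ|` by the Schwarz lemma, while the explicit disc `η ↦ (η, (γ / a) φ_a(η))` shows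
`δ_{1,0}(0, γ) ≤ log |a|`. So if the disc is extremal for `δ_{1,0}`, then `|ζ| = |a|`, and the
equality case of the Schwarz lemma makes the first coordinate a rotation. Its pole preimages
then satisfy `|ζ₁| = |a|` and `|ζ₂| = |b|`, while the second coordinate vanishes at `ζ₁` and `ζ₂`,
so the Schwarz–Pick lemma with two zeros gives `|γ| ≤ |ζ₁| |ζ₂| = |ab|`. -/

open Complex Metric Set Filter Topology

noncomputable section

variable {E : Type*} [NormedAddCommGroup E] [NormedSpace ℂ E]

/-- The open unit bidisk `D × D ⊆ ℂ²`. -/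
def bidisk : Set (ℂ × ℂ) := {z | ‖z.1‖ < 1 ∧ ‖z.2‖ < 1}

/-- The Lempert function of `Ω` with poles `w 0, …, w (k-1)` and weights
`ν 0, …, ν (k-1)`: the infimum of `Σ_j ν_j log|ζ_j|` over analytic discs `f : D → Ω` with
`f(0) = z` and `f(ζ_j) = w j` for all `j < k`. -/
def lempert (Ω : Set E) (k : ℕ) (w : ℕ → E) (ν : ℕ → ℝ) (z : E) : EReal :=
  sInf {d : EReal | ∃ f : ℂ → E, DifferentiableOn ℂ f (Metric.ball 0 1) ∧
    Set.MapsTo f (Metric.ball 0 1) Ω ∧ f 0 = z ∧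
    ∃ ζ : ℕ → ℂ, (∀ j < k, ζ j ∈ Metric.ball (0 : ℂ) 1 ∧ f (ζ j) = w j) ∧
      d = ((∑ j ∈ Finset.range k, ν j * Real.log (‖ζ j‖) : ℝ) : EReal)}

open ComplexConjugate

/-- The involutive automorphism `φ_p` of the unit disc exchanging `0` and `p`. -/
def mobius (p z : ℂ) : ℂ := (p - z) / (1 - conj p * z)

section Mobius

variable {p q z : ℂ}

@[simp] theorem mobius_zero (p : ℂ) : mobius p 0 = p := by simp [mobius]

@[simp] theorem mobius_self (p : ℂ) : mobius p p = 0 := by simp [mobius]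

theorem one_sub_conj_mul_ne_zero (hp : ‖p‖ < 1) (hz : ‖z‖ ≤ 1) : 1 - conj p * z ≠ 0 := by
  intro h0
  have : ‖conj p * z‖ = 1 := by rw [← sub_eq_zero.1 h0]; simp
  rw [norm_mul, Complex.norm_conj] at this
  nlinarith [norm_nonneg p, norm_nonneg z]

theorem normSq_one_sub_conj_mul_sub_normSq_sub (p z : ℂ) :
    normSq (1 - conj p * z) - normSq (p - z) = (1 - normSq p) * (1 - normSq z) := by
  simp only [normSq_apply, sub_re, sub_im, mul_re, mul_im, conj_re, conj_im, one_re, one_im]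
  ring

theorem norm_mobius_lt_one (hp : ‖p‖ < 1) (hz : ‖z‖ < 1) : ‖mobius p z‖ < 1 := by
  have hd := one_sub_conj_mul_ne_zero hp hz.le
  rw [mobius, norm_div, div_lt_one (norm_pos_iff.mpr hd),
    ← sq_lt_sq₀ (norm_nonneg _) (norm_nonneg _), Complex.sq_norm, Complex.sq_norm,
    ← sub_pos, normSq_one_sub_conj_mul_sub_normSq_sub]
  have hp' : normSq p < 1 := by rw [← Complex.sq_norm]; nlinarith [norm_nonneg p]
  have hz' : normSq z < 1 := by rw [← Complex.sq_norm]; nlinarith [norm_nonneg z]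
  exact mul_pos (sub_pos.2 hp') (sub_pos.2 hz')

theorem mobius_mobius (hp : ‖p‖ < 1) (hz : ‖z‖ < 1) : mobius p (mobius p z) = z := by
  have hd := one_sub_conj_mul_ne_zero hp hz.le
  have hpp : 1 - conj p * p ≠ 0 := one_sub_conj_mul_ne_zero hp hp.le
  have hnum : p - mobius p z = z * (1 - conj p * p) / (1 - conj p * z) := by
    rw [mobius, eq_div_iff hd, sub_mul, div_mul_cancel₀ _ hd]; ring
  have hden : 1 - conj p * mobius p z = (1 - conj p * p) / (1 - conj p * z) := by
    rw [mobius, eq_div_iff hd, sub_mul, mul_assoc, div_mul_cancel₀ _ hd]; ring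
  rw [mobius, hnum, hden, div_div_div_cancel_right₀ hd, mul_div_cancel_right₀ _ hpp]

theorem norm_mobius_comm (p q : ℂ) : ‖mobius p q‖ = ‖mobius q p‖ := by
  have : ‖1 - conj p * q‖ = ‖1 - conj q * p‖ := by
    rw [← Complex.norm_conj]; simp [mul_comm]
  rw [mobius, mobius, norm_div, norm_div, norm_sub_rev, this]

theorem differentiableOn_mobius (hp : ‖p‖ < 1) : DifferentiableOn ℂ (mobius p) (ball 0 1) := by
  intro z hz
  have hd := one_sub_conj_mul_ne_zero hp (mem_ball_zero_iff.1 hz).le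
  exact (((differentiableAt_const p).sub differentiableAt_id).div
    ((differentiableAt_const 1).sub ((differentiableAt_const _).mul differentiableAt_id))
    hd).differentiableWithinAt

theorem mapsTo_mobius (hp : ‖p‖ < 1) : MapsTo (mobius p) (ball 0 1) (ball 0 1) := fun _ hz =>
  mem_ball_zero_iff.2 (norm_mobius_lt_one hp (mem_ball_zero_iff.1 hz))

end Mobius

section Schwarz

variable {f : ℂ → ℂ} {p q w ζ ζ₁ ζ₂ : ℂ}

theorem norm_le_norm_mobius_of_mapsTo_ball (hd : DifferentiableOn ℂ f (ball 0 1))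
    (hm : MapsTo f (ball 0 1) (closedBall 0 1)) (hp : ‖p‖ < 1) (hq : ‖q‖ < 1) (hfp : f p = 0) :
    ‖f q‖ ≤ ‖mobius p q‖ := by
  have := Complex.norm_le_norm_of_mapsTo_ball (hd.comp (differentiableOn_mobius hp)
    (mapsTo_mobius hp)) (hm.comp (mapsTo_mobius hp)) (by simp [hfp]) (norm_mobius_lt_one hp hq)
  rwa [Function.comp_apply, mobius_mobius hp hq] at this

theorem norm_le_mul_norm_mobius_of_mapsTo_ball (hd : DifferentiableOn ℂ f (ball 0 1))
    (hm : MapsTo f (ball 0 1) (closedBall 0 1)) (h₀ : f 0 = 0) (hw : ‖w‖ < 1) (hw₀ : w ≠ 0)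
    (hfw : f w = 0) (hq : ‖q‖ < 1) : ‖f q‖ ≤ ‖q‖ * ‖mobius w q‖ := by
  set g := dslope f 0
  have hgd : DifferentiableOn ℂ g (ball 0 1) :=
    (differentiableOn_dslope (isOpen_ball.mem_nhds (mem_ball_self one_pos))).mpr hd
  have hgm : MapsTo g (ball 0 1) (closedBall 0 1) := fun z hz => by
    simpa using Complex.norm_dslope_le_div_of_mapsTo_ball hd (by rwa [h₀]) hz
  have hfg : ∀ z, f z = z * g z := fun z => by simpa [h₀] using (sub_smul_dslope f 0 z).symm
  have hgw : g w = 0 := by simpa [hw₀, hfw] using hfg w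
  rw [hfg, norm_mul]
  exact mul_le_mul_of_nonneg_left (norm_le_norm_mobius_of_mapsTo_ball hgd hgm hw hq hgw)
    (norm_nonneg q)

theorem norm_apply_zero_le_mul_of_mapsTo_ball (hd : DifferentiableOn ℂ f (ball 0 1))
    (hm : MapsTo f (ball 0 1) (closedBall 0 1)) (h₁ : ‖ζ₁‖ < 1) (h₂ : ‖ζ₂‖ < 1) (hne : ζ₁ ≠ ζ₂)
    (hf₁ : f ζ₁ = 0) (hf₂ : f ζ₂ = 0) : ‖f 0‖ ≤ ‖ζ₁‖ * ‖ζ₂‖ := by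
  set w := mobius ζ₁ ζ₂
  have hw₀ : w ≠ 0 := fun h => hne <| by rw [← mobius_zero ζ₁, ← h, mobius_mobius h₁ h₂]
  have key := norm_le_mul_norm_mobius_of_mapsTo_ball (hd.comp (differentiableOn_mobius h₁)
    (mapsTo_mobius h₁)) (hm.comp (mapsTo_mobius h₁)) (by simp [hf₁]) (norm_mobius_lt_one h₁ h₂)
    hw₀ (by simp [mobius_mobius h₁ h₂, hf₂]) h₁
  rwa [Function.comp_apply, mobius_self, norm_mobius_comm, mobius_mobius h₁ h₂] at key

theorem norm_eq_norm_of_mapsTo_ball (hd : DifferentiableOn ℂ f (ball 0 1))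
    (hm : MapsTo f (ball 0 1) (closedBall 0 1)) (h₀ : f 0 = 0) (hζ : ζ ∈ ball 0 1) (hζ₀ : ζ ≠ 0)
    (hle : ‖ζ‖ ≤ ‖f ζ‖) : ∀ z ∈ ball (0 : ℂ) 1, ‖f z‖ = ‖z‖ := by
  have heq : ‖f ζ‖ = ‖ζ‖ :=
    (Complex.norm_le_norm_of_mapsTo_ball hd hm h₀ (mem_ball_zero_iff.1 hζ)).antisymm hle
  have hslope : ‖dslope f 0 ζ‖ = 1 / 1 := by
    rw [dslope_of_ne _ hζ₀, slope_def_field, h₀, sub_zero, sub_zero, norm_div, heq,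
      div_self (norm_ne_zero_iff.mpr hζ₀), div_one]
  intro z hz
  rw [Complex.affine_of_mapsTo_ball_of_norm_dslope_eq_div hd (by rwa [h₀]) hζ hslope hz]
  simp [h₀, hslope]

end Schwarz

theorem lempert_bidisk_single_pole_le {a γ : ℂ} (ha : ‖a‖ < 1) (hγ : ‖γ‖ ≤ ‖a‖) :
    lempert bidisk 1 (fun _ => ((a, 0) : ℂ × ℂ)) (fun _ => 1) ((0 : ℂ), γ) ≤
      ((Real.log ‖a‖ : ℝ) : EReal) := by
  have hγa : ‖γ / a‖ ≤ 1 := by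
    rw [norm_div]; exact div_le_one_of_le₀ hγ (norm_nonneg a)
  refine sInf_le ⟨fun η => (η, γ / a * mobius a η),
    differentiableOn_id.prodMk ((differentiableOn_mobius ha).const_mul _), fun η hη => ?_, ?_,
    fun _ => a, fun _ _ => ⟨mem_ball_zero_iff.2 ha, by simp⟩, by simp⟩
  · rw [mem_ball_zero_iff] at hη
    refine ⟨hη, ?_⟩
    rw [norm_mul]
    exact mul_lt_one_of_nonneg_of_lt_one_right hγa (norm_nonneg _) (norm_mobius_lt_one ha hη)
  · simp only [mobius_zero, Prod.mk.injEq, true_and]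
    exact div_mul_cancel_of_imp fun h => by simpa [h] using hγ

theorem statement15_general (a b γ : ℂ) (ha0 : a ≠ 0) (hab : a ≠ b)
    (ha1 : ‖a‖ < 1)
    (hγ1 : ‖a * b‖ < ‖γ‖)
    (hγ2 : ‖γ‖ < min (‖a‖) (‖b‖)) :
    ¬ ∃ f : ℂ → ℂ × ℂ, DifferentiableOn ℂ f (Metric.ball 0 1) ∧
        Set.MapsTo f (Metric.ball 0 1) bidisk ∧ f 0 = ((0 : ℂ), γ) ∧
        (∃ ζ₁ ζ₂ : ℂ, ζ₁ ∈ Metric.ball (0 : ℂ) 1 ∧ ζ₂ ∈ Metric.ball (0 : ℂ) 1 ∧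
          f ζ₁ = (a, 0) ∧ f ζ₂ = (b, 0) ∧
          ((Real.log (‖ζ₁‖) + Real.log (‖ζ₂‖) : ℝ) : EReal) =
            lempert bidisk 2 (fun j => if j = 0 then ((a, 0) : ℂ × ℂ) else (b, 0))
              (fun _ => 1) ((0 : ℂ), γ)) ∧
        (∃ ζ : ℂ, ζ ∈ Metric.ball (0 : ℂ) 1 ∧ f ζ = (a, 0) ∧
          ((Real.log (‖ζ‖) : ℝ) : EReal) =
            lempert bidisk 1 (fun _ => ((a, 0) : ℂ × ℂ)) (fun _ => 1) ((0 : ℂ), γ)) := by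
  rintro ⟨f, hfd, hfm, hf0, ⟨ζ₁, ζ₂, hζ₁, hζ₂, hfζ₁, hfζ₂, -⟩, ζ, hζ, hfζ, hδ⟩
  have hζ0 : ζ ≠ 0 := by rintro rfl; simp [hf0, eq_comm, ha0] at hfζ
  have hζa : ‖ζ‖ ≤ ‖a‖ := by
    have := hδ.trans_le (lempert_bidisk_single_pole_le ha1 (hγ2.le.trans (min_le_left _ _)))
    exact (Real.log_le_log_iff (norm_pos_iff.2 hζ0) (norm_pos_iff.2 ha0)).1
      (EReal.coe_le_coe_iff.1 this)
  have hrot : ∀ z ∈ ball (0 : ℂ) 1, ‖(f z).1‖ = ‖z‖ :=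
    norm_eq_norm_of_mapsTo_ball hfd.fst (fun z hz => mem_closedBall_zero_iff.2 (hfm hz).1.le)
      (by simp [hf0]) hζ hζ0 (by simpa [hfζ] using hζa)
  have hne : ζ₁ ≠ ζ₂ := by rintro rfl; simp [hfζ₁, hab] at hfζ₂
  have hγ : ‖(f 0).2‖ ≤ ‖ζ₁‖ * ‖ζ₂‖ :=
    norm_apply_zero_le_mul_of_mapsTo_ball hfd.snd
      (fun z hz => mem_closedBall_zero_iff.2 (hfm hz).2.le) (mem_ball_zero_iff.1 hζ₁)
      (mem_ball_zero_iff.1 hζ₂) hne (by simp [hfζ₁]) (by simp [hfζ₂])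
  rw [hf0, ← hrot ζ₁ hζ₁, ← hrot ζ₂ hζ₂, hfζ₁, hfζ₂, ← norm_mul] at hγ
  exact hγ1.not_ge hγ

/-- With `a, b ∈ D` distinct and nonzero and `z = (0, γ)`, `|ab| < |γ| < min |a| |b|`,
there is no analytic disc through `z` simultaneously attaining the infimum defining the
Lempert function `δ_{1,1}(z)` (poles `(a,0)`, `(b,0)` of weight `1`) and the one defining
`δ_{1,0}(z)` (single pole `(a,0)` of weight `1`). -/
theorem statement15 (a b γ : ℂ) (ha0 : a ≠ 0) (hb0 : b ≠ 0) (hab : a ≠ b)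
    (ha1 : ‖a‖ < 1) (hb1 : ‖b‖ < 1)
    (hγ1 : ‖a * b‖ < ‖γ‖)
    (hγ2 : ‖γ‖ < min (‖a‖) (‖b‖)) :
    ¬ ∃ f : ℂ → ℂ × ℂ, DifferentiableOn ℂ f (Metric.ball 0 1) ∧
        Set.MapsTo f (Metric.ball 0 1) bidisk ∧ f 0 = ((0 : ℂ), γ) ∧
        (∃ ζ₁ ζ₂ : ℂ, ζ₁ ∈ Metric.ball (0 : ℂ) 1 ∧ ζ₂ ∈ Metric.ball (0 : ℂ) 1 ∧
          f ζ₁ = (a, 0) ∧ f ζ₂ = (b, 0) ∧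
          ((Real.log (‖ζ₁‖) + Real.log (‖ζ₂‖) : ℝ) : EReal) =
            lempert bidisk 2 (fun j => if j = 0 then ((a, 0) : ℂ × ℂ) else (b, 0))
              (fun _ => 1) ((0 : ℂ), γ)) ∧
        (∃ ζ : ℂ, ζ ∈ Metric.ball (0 : ℂ) 1 ∧ f ζ = (a, 0) ∧
          ((Real.log (‖ζ‖) : ℝ) : EReal) =
            lempert bidisk 1 (fun _ => ((a, 0) : ℂ × ℂ)) (fun _ => 1) ((0 : ℂ), γ)) :=
  statement15_general a b γ ha0 hab ha1 hγ1 hγ2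
end
end

section
/- Let D×D be the bidisk in ℂ², let a, b ∈ D be distinct and nonzero, and let z = (0, γ) with |ab| < |γ| < min{|a|, |b|}. Then the Lempert function of D×D with poles (a,0) and (b,0), both of weight 1, satisfies δ(z) = log|γ|; moreover this value is attained by the holomorphic disc f(ζ) = (βζ, ((ζ − ζ₁)/(1 − ζ̄₁ζ))·((ζ − ζ₂)/(1 − ζ̄₂ζ))), where ζ₁ ∈ D satisfies ζ₁² = γa/b, ζ₂ = γ/ζ₁ and β = a/ζ₁. -/
/-!
The disc `ζ ↦ (βζ, B_{ζ₁}(ζ) B_{ζ₂}(ζ))` passes through `(0, γ)`, `(a, 0)`, `(b, 0)` at `0`, `ζ₁`, `ζ₂`,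
and `log|ζ₁| + log|ζ₂| = log|γ|`; the bounds on `|γ|` are what put `ζ₁`, `ζ₂` and the
first coordinate inside the disc. Conversely, the second coordinate `g` of any competing disc maps
`D` into `D`, equals `γ` at `0` and vanishes at the two preimages `p ≠ q` of the poles. Dividing `g`
twice by Blaschke factors (each division is the Schwarz lemma after a Möbius change of variable)
gives `|γ| = |g 0| ≤ |p| |q|`.
-/

open Complex Metric Set Filter Topology

noncomputable section

variable {E : Type*} [NormedAddCommGroup E] [NormedSpace ℂ E]

def blaschkeFactor (p z : ℂ) : ℂ := (z - p) / (1 - starRingEnd ℂ p * z)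

namespace blaschkeFactor

lemma normSq_denom_sub_normSq_num (p z : ℂ) :
    normSq (1 - starRingEnd ℂ p * z) - normSq (z - p) = (1 - normSq p) * (1 - normSq z) := by
  simp only [normSq_apply, sub_re, sub_im, mul_re, mul_im, one_re, one_im, conj_re, conj_im]
  ring

lemma denom_ne_zero {p z : ℂ} (hp : ‖p‖ < 1) (hz : ‖z‖ < 1) : 1 - starRingEnd ℂ p * z ≠ 0 := by
  have : ‖starRingEnd ℂ p * z‖ < 1 := by
    rw [norm_mul, Complex.norm_conj]
    nlinarith [norm_nonneg p, norm_nonneg z]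
  intro h
  rw [← sub_eq_zero.mp h, norm_one] at this
  exact this.false

lemma norm_lt_one {p z : ℂ} (hp : ‖p‖ < 1) (hz : ‖z‖ < 1) : ‖blaschkeFactor p z‖ < 1 := by
  have hd := denom_ne_zero hp hz
  rw [blaschkeFactor, norm_div, div_lt_one (norm_pos_iff.mpr hd), ← sq_lt_sq₀ (norm_nonneg _)
    (norm_nonneg _), Complex.sq_norm, Complex.sq_norm]
  have hp' : normSq p < 1 := by rw [← Complex.sq_norm]; nlinarith [norm_nonneg p]
  have hz' : normSq z < 1 := by rw [← Complex.sq_norm]; nlinarith [norm_nonneg z]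
  nlinarith [normSq_denom_sub_normSq_num p z, mul_pos (sub_pos.2 hp') (sub_pos.2 hz')]

lemma mapsTo_ball {p : ℂ} (hp : ‖p‖ < 1) : MapsTo (blaschkeFactor p) (ball 0 1) (ball 0 1) :=
  fun _ hz => mem_ball_zero_iff.2 (norm_lt_one hp (mem_ball_zero_iff.1 hz))

lemma differentiableOn {p : ℂ} (hp : ‖p‖ < 1) : DifferentiableOn ℂ (blaschkeFactor p) (ball 0 1) :=
  (differentiableOn_id.sub_const p).div (differentiableOn_const 1 |>.sub
    (differentiableOn_id.const_mul _)) fun _ hz => denom_ne_zero hp (mem_ball_zero_iff.1 hz)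

@[simp] lemma apply_self (p : ℂ) : blaschkeFactor p p = 0 := by simp [blaschkeFactor]

@[simp] lemma apply_zero (p : ℂ) : blaschkeFactor p 0 = -p := by simp [blaschkeFactor]

lemma apply_ne_zero {p z : ℂ} (hp : ‖p‖ < 1) (hz : ‖z‖ < 1) (hzp : z ≠ p) :
    blaschkeFactor p z ≠ 0 :=
  div_ne_zero (sub_ne_zero.2 hzp) (denom_ne_zero hp hz)

lemma neg_apply_apply {p z : ℂ} (hp : ‖p‖ < 1) (hz : ‖z‖ < 1) :
    blaschkeFactor (-p) (blaschkeFactor p z) = z := by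
  have hd := denom_ne_zero hp hz
  have hpp : 1 - starRingEnd ℂ p * p ≠ 0 := denom_ne_zero hp hp
  have hden : 1 + starRingEnd ℂ p * ((z - p) / (1 - starRingEnd ℂ p * z))
      = (1 - starRingEnd ℂ p * p) / (1 - starRingEnd ℂ p * z) := by
    field_simp
    ring
  simp only [blaschkeFactor, map_neg, sub_neg_eq_add, neg_mul, sub_neg_eq_add]
  rw [hden, div_eq_iff (div_ne_zero hpp hd), div_add' _ _ _ hd, ← mul_div_assoc,
    div_left_inj' hd]
  ring

end blaschkeFactor

open blaschkeFactor in
theorem exists_eq_blaschkeFactor_mul {g : ℂ → ℂ} {p : ℂ} (hp : ‖p‖ < 1)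
    (hg : DifferentiableOn ℂ g (ball 0 1)) (hmaps : MapsTo g (ball 0 1) (closedBall 0 1))
    (hgp : g p = 0) :
    ∃ h : ℂ → ℂ, DifferentiableOn ℂ h (ball 0 1) ∧ MapsTo h (ball 0 1) (closedBall 0 1) ∧
      ∀ z ∈ ball (0 : ℂ) 1, g z = blaschkeFactor p z * h z := by
  have hp' : ‖-p‖ < 1 := by rwa [norm_neg]
  -- Move the zero to the origin and apply the Schwarz lemma to `G = g ∘ blaschkeFactor (-p)`.
  set G := g ∘ blaschkeFactor (-p)
  have hG0 : G 0 = 0 := by simpa [G] using hgp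
  have hGd : DifferentiableOn ℂ G (ball 0 1) := hg.comp (differentiableOn hp') (mapsTo_ball hp')
  have hGmaps : MapsTo G (ball 0 1) (closedBall (G 0) 1) := by
    rw [hG0]; exact hmaps.comp (mapsTo_ball hp')
  refine ⟨dslope G 0 ∘ blaschkeFactor p, ?_, ?_, fun z hz => ?_⟩
  · exact ((Complex.differentiableOn_dslope (ball_mem_nhds 0 one_pos)).2 hGd).comp
      (differentiableOn hp) (mapsTo_ball hp)
  · intro z hz
    simpa using Complex.norm_dslope_le_div_of_mapsTo_ball hGd hGmaps (mapsTo_ball hp hz)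
  · have hz' := mem_ball_zero_iff.1 hz
    have := sub_smul_dslope G 0 (blaschkeFactor p z)
    simp only [sub_zero, hG0, smul_eq_mul, G, Function.comp_apply, neg_apply_apply hp hz'] at this
    exact this.symm

open blaschkeFactor in
theorem norm_apply_zero_le_mul_of_apply_eq_zero {g : ℂ → ℂ} {p q : ℂ} (hp : ‖p‖ < 1)
    (hq : ‖q‖ < 1) (hpq : p ≠ q) (hg : DifferentiableOn ℂ g (ball 0 1))
    (hmaps : MapsTo g (ball 0 1) (closedBall 0 1)) (hgp : g p = 0) (hgq : g q = 0) :
    ‖g 0‖ ≤ ‖p‖ * ‖q‖ := by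
  have h0 : (0 : ℂ) ∈ ball (0 : ℂ) 1 := mem_ball_self one_pos
  obtain ⟨h, hd, hhmaps, hgh⟩ := exists_eq_blaschkeFactor_mul hp hg hmaps hgp
  have hhq : h q = 0 := by
    rw [hgh q (mem_ball_zero_iff.2 hq)] at hgq
    exact (mul_eq_zero.1 hgq).resolve_left (apply_ne_zero hp hq hpq.symm)
  obtain ⟨k, -, hkmaps, hhk⟩ := exists_eq_blaschkeFactor_mul hq hd hhmaps hhq
  have hk0 : ‖k 0‖ ≤ 1 := mem_closedBall_zero_iff.1 (hkmaps h0)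
  rw [hgh 0 h0, hhk 0 h0, apply_zero, apply_zero, norm_mul, norm_mul, norm_neg, norm_neg]
  nlinarith [mul_nonneg (norm_nonneg p) (norm_nonneg q)]

theorem lempert_le_of_disc {Ω : Set E} {k : ℕ} {w : ℕ → E} {ν : ℕ → ℝ} {z : E} {f : ℂ → E}
    (hf : DifferentiableOn ℂ f (ball 0 1)) (hmaps : MapsTo f (ball 0 1) Ω) (hf0 : f 0 = z)
    {ζ : ℕ → ℂ} (hζ : ∀ j < k, ζ j ∈ ball (0 : ℂ) 1 ∧ f (ζ j) = w j) :
    lempert Ω k w ν z ≤ ((∑ j ∈ Finset.range k, ν j * Real.log ‖ζ j‖ : ℝ) : EReal) :=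
  sInf_le ⟨f, hf, hmaps, hf0, ζ, hζ, rfl⟩

def twoPointDisc (β p q : ℂ) : ℂ → ℂ × ℂ :=
  fun ζ => (β * ζ, blaschkeFactor p ζ * blaschkeFactor q ζ)

namespace twoPointDisc

open blaschkeFactor

variable {β p q : ℂ}

lemma differentiableOn (hp : ‖p‖ < 1) (hq : ‖q‖ < 1) :
    DifferentiableOn ℂ (twoPointDisc β p q) (ball 0 1) :=
  (differentiableOn_id.const_mul β).prodMk
    ((blaschkeFactor.differentiableOn hp).mul (blaschkeFactor.differentiableOn hq))

lemma mapsTo_bidisk (hβ : ‖β‖ ≤ 1) (hp : ‖p‖ < 1) (hq : ‖q‖ < 1) :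
    MapsTo (twoPointDisc β p q) (ball 0 1) bidisk := by
  intro z hz
  have hz' := mem_ball_zero_iff.1 hz
  refine ⟨?_, ?_⟩
  · calc ‖β * z‖ = ‖β‖ * ‖z‖ := norm_mul β z
      _ < 1 := by nlinarith [norm_nonneg β, norm_nonneg z]
  · calc ‖blaschkeFactor p z * blaschkeFactor q z‖
          = ‖blaschkeFactor p z‖ * ‖blaschkeFactor q z‖ := norm_mul _ _
      _ < 1 := mul_lt_one_of_nonneg_of_lt_one_left (norm_nonneg _) (norm_lt_one hp hz')
          (norm_lt_one hq hz').le

lemma apply_zero : twoPointDisc β p q 0 = (0, p * q) := by simp [twoPointDisc]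

lemma apply_left : twoPointDisc β p q p = (β * p, 0) := by simp [twoPointDisc]

lemma apply_right : twoPointDisc β p q q = (β * q, 0) := by simp [twoPointDisc]

end twoPointDisc

theorem log_norm_le_lempert_bidisk {a b γ : ℂ} (z₁ : ℂ) (hab : a ≠ b) (hγ : γ ≠ 0) :
    ((Real.log ‖γ‖ : ℝ) : EReal) ≤
      lempert bidisk 2 (fun j => if j = 0 then ((a, 0) : ℂ × ℂ) else (b, 0)) (fun _ => 1)
        (z₁, γ) := by
  refine le_sInf ?_
  rintro _ ⟨f, hf, hmaps, hf0, ζ, hζ, rfl⟩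
  obtain ⟨hp, hfp⟩ := hζ 0 (by norm_num)
  obtain ⟨hq, hfq⟩ := hζ 1 (by norm_num)
  simp only [if_true, one_ne_zero, if_false] at hfp hfq
  have hpq : ζ 0 ≠ ζ 1 := fun h => hab (congrArg Prod.fst (hfp.symm.trans (h ▸ hfq)))
  -- The second coordinate of the disc is a self-map of the disc vanishing at both poles.
  have key := norm_apply_zero_le_mul_of_apply_eq_zero (g := fun z => (f z).2)
    (mem_ball_zero_iff.1 hp) (mem_ball_zero_iff.1 hq) hpq hf.snd
    (fun z hz => mem_closedBall_zero_iff.2 (hmaps hz).2.le) (by simp [hfp]) (by simp [hfq])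
  simp only [hf0] at key
  have hγ' : 0 < ‖γ‖ := norm_pos_iff.2 hγ
  have hp0 : 0 < ‖ζ 0‖ := by by_contra! h; nlinarith [norm_nonneg (ζ 0), norm_nonneg (ζ 1)]
  have hq0 : 0 < ‖ζ 1‖ := by by_contra! h; nlinarith [norm_nonneg (ζ 0), norm_nonneg (ζ 1)]
  simp only [Finset.sum_range_succ, Finset.sum_range_zero, zero_add, one_mul]
  rw [← Real.log_mul hp0.ne' hq0.ne']
  exact EReal.coe_le_coe_iff.2 (Real.log_le_log hγ' key)

lemma norm_bounds_of_sq_eq {a b γ ζ₁ : ℂ} (ha1 : ‖a‖ < 1) (hb1 : ‖b‖ < 1)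
    (hγ1 : ‖a * b‖ < ‖γ‖) (hγ2 : ‖γ‖ < min ‖a‖ ‖b‖) (hζ₁ : ζ₁ ^ 2 = γ * a / b) :
    ‖a‖ < ‖ζ₁‖ ∧ ‖ζ₁‖ < 1 ∧ ‖γ‖ < ‖ζ₁‖ := by
  rw [norm_mul] at hγ1
  obtain ⟨hγa, hγb⟩ := lt_min_iff.1 hγ2
  have hb : 0 < ‖b‖ := (norm_nonneg γ).trans_lt hγb
  have hsq : ‖ζ₁‖ ^ 2 * ‖b‖ = ‖γ‖ * ‖a‖ := by
    rw [← norm_pow, hζ₁, norm_div, norm_mul, div_mul_cancel₀ _ hb.ne']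
  have ha : 0 < ‖a‖ := (norm_nonneg γ).trans_lt hγa
  have hγ : 0 < ‖γ‖ := (mul_nonneg ha.le hb.le).trans_lt hγ1
  have hζ : 0 ≤ ‖ζ₁‖ := norm_nonneg ζ₁
  refine ⟨?_, ?_, ?_⟩
  · have : ‖a‖ ^ 2 * ‖b‖ < ‖ζ₁‖ ^ 2 * ‖b‖ := by rw [hsq]; nlinarith
    exact (sq_lt_sq₀ ha.le hζ).1 (lt_of_mul_lt_mul_right this hb.le)
  · have : ‖ζ₁‖ ^ 2 * ‖b‖ < 1 * ‖b‖ := by rw [hsq]; nlinarith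
    exact (sq_lt_one_iff₀ hζ).1 (lt_of_mul_lt_mul_right this hb.le)
  · have : ‖γ‖ ^ 2 * ‖b‖ < ‖ζ₁‖ ^ 2 * ‖b‖ := by rw [hsq]; nlinarith
    exact (sq_lt_sq₀ hγ.le hζ).1 (lt_of_mul_lt_mul_right this hb.le)

theorem statement16_general (a b γ : ℂ) (hab : a ≠ b)
    (ha1 : ‖a‖ < 1) (hb1 : ‖b‖ < 1)
    (hγ1 : ‖a * b‖ < ‖γ‖)
    (hγ2 : ‖γ‖ < min (‖a‖) (‖b‖))
    (ζ₁ : ℂ) (hζ₁ : ζ₁ ^ 2 = γ * a / b) :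
    lempert bidisk 2 (fun j => if j = 0 then ((a, 0) : ℂ × ℂ) else (b, 0)) (fun _ => 1)
        ((0 : ℂ), γ) = ((Real.log (‖γ‖) : ℝ) : EReal) ∧
      DifferentiableOn ℂ
        (fun ζ => ((a / ζ₁ * ζ,
          (ζ - ζ₁) / (1 - (starRingEnd ℂ ζ₁) * ζ) *
            ((ζ - γ / ζ₁) / (1 - (starRingEnd ℂ (γ / ζ₁)) * ζ))) : ℂ × ℂ))
        (Metric.ball 0 1) ∧
      Set.MapsTo
        (fun ζ => ((a / ζ₁ * ζ,
          (ζ - ζ₁) / (1 - (starRingEnd ℂ ζ₁) * ζ) *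
            ((ζ - γ / ζ₁) / (1 - (starRingEnd ℂ (γ / ζ₁)) * ζ))) : ℂ × ℂ))
        (Metric.ball 0 1) bidisk ∧
      ζ₁ ∈ Metric.ball (0 : ℂ) 1 ∧ γ / ζ₁ ∈ Metric.ball (0 : ℂ) 1 ∧
      (fun ζ => ((a / ζ₁ * ζ,
          (ζ - ζ₁) / (1 - (starRingEnd ℂ ζ₁) * ζ) *
            ((ζ - γ / ζ₁) / (1 - (starRingEnd ℂ (γ / ζ₁)) * ζ))) : ℂ × ℂ)) 0
        = ((0 : ℂ), γ) ∧
      (fun ζ => ((a / ζ₁ * ζ,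
          (ζ - ζ₁) / (1 - (starRingEnd ℂ ζ₁) * ζ) *
            ((ζ - γ / ζ₁) / (1 - (starRingEnd ℂ (γ / ζ₁)) * ζ))) : ℂ × ℂ)) ζ₁
        = ((a, 0) : ℂ × ℂ) ∧
      (fun ζ => ((a / ζ₁ * ζ,
          (ζ - ζ₁) / (1 - (starRingEnd ℂ ζ₁) * ζ) *
            ((ζ - γ / ζ₁) / (1 - (starRingEnd ℂ (γ / ζ₁)) * ζ))) : ℂ × ℂ)) (γ / ζ₁)
        = ((b, 0) : ℂ × ℂ) ∧
      Real.log (‖ζ₁‖) + Real.log (‖γ / ζ₁‖) =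
        Real.log (‖γ‖) := by
  obtain ⟨haζ, hζ1, hγζ⟩ := norm_bounds_of_sq_eq ha1 hb1 hγ1 hγ2 hζ₁
  have hζ0 : ζ₁ ≠ 0 := norm_pos_iff.1 ((norm_nonneg a).trans_lt haζ)
  have hγ0 : γ ≠ 0 := norm_pos_iff.1 ((norm_nonneg _).trans_lt hγ1)
  have hβ : ‖a / ζ₁‖ ≤ 1 := by rw [norm_div]; exact div_le_one_of_le₀ haζ.le (norm_nonneg _)
  have hq : ‖γ / ζ₁‖ < 1 := by rwa [norm_div, div_lt_one (norm_pos_iff.2 hζ0)]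
  have h0 : twoPointDisc (a / ζ₁) ζ₁ (γ / ζ₁) 0 = (0, γ) := by
    rw [twoPointDisc.apply_zero, mul_div_cancel₀ _ hζ0]
  have hfp : twoPointDisc (a / ζ₁) ζ₁ (γ / ζ₁) ζ₁ = (a, 0) := by
    rw [twoPointDisc.apply_left, div_mul_cancel₀ _ hζ0]
  have hfq : twoPointDisc (a / ζ₁) ζ₁ (γ / ζ₁) (γ / ζ₁) = (b, 0) := by
    have hγa : γ * a ≠ 0 := (div_ne_zero_iff.1 (hζ₁ ▸ pow_ne_zero 2 hζ0)).1
    rw [twoPointDisc.apply_right, div_mul_div_comm, mul_comm a γ, ← sq, hζ₁,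
      div_div_cancel₀ hγa]
  have hlog : Real.log ‖ζ₁‖ + Real.log ‖γ / ζ₁‖ = Real.log ‖γ‖ := by
    rw [← Real.log_mul (norm_ne_zero_iff.2 hζ0) (norm_ne_zero_iff.2 (div_ne_zero hγ0 hζ0)),
      ← norm_mul, mul_div_cancel₀ _ hζ0]
  have hdiff := twoPointDisc.differentiableOn (β := a / ζ₁) hζ1 hq
  have hmaps := twoPointDisc.mapsTo_bidisk hβ hζ1 hq
  have hpoles : ∀ j < 2, (if j = 0 then ζ₁ else γ / ζ₁) ∈ ball (0 : ℂ) 1 ∧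
      twoPointDisc (a / ζ₁) ζ₁ (γ / ζ₁) (if j = 0 then ζ₁ else γ / ζ₁) =
        if j = 0 then ((a, 0) : ℂ × ℂ) else (b, 0) := by
    intro j hj
    interval_cases j
    exacts [⟨mem_ball_zero_iff.2 hζ1, hfp⟩, ⟨mem_ball_zero_iff.2 hq, hfq⟩]
  refine ⟨le_antisymm ?_ (log_norm_le_lempert_bidisk 0 hab hγ0), hdiff, hmaps,
    mem_ball_zero_iff.2 hζ1, mem_ball_zero_iff.2 hq, h0, hfp, hfq, hlog⟩
  calc _ ≤ _ := lempert_le_of_disc hdiff hmaps h0 hpoles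
    _ = _ := by
      simp only [Finset.sum_range_succ, Finset.sum_range_zero, zero_add, one_mul, ↓reduceIte,
        one_ne_zero, hlog]

/-- With `a, b ∈ D` distinct and nonzero and `z = (0, γ)`, `|ab| < |γ| < min |a| |b|`,
the Lempert function of the bidisk with poles `(a,0)`, `(b,0)` of weight `1` satisfies
`δ(z) = log |γ|`, and the value is attained by the analytic disc
`f(ζ) = (βζ, ((ζ-ζ₁)/(1-ζ̄₁ζ))·((ζ-ζ₂)/(1-ζ̄₂ζ)))` with `ζ₁² = γa/b`, `ζ₂ = γ/ζ₁`,
`β = a/ζ₁`. -/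
theorem statement16 (a b γ : ℂ) (ha0 : a ≠ 0) (hb0 : b ≠ 0) (hab : a ≠ b)
    (ha1 : ‖a‖ < 1) (hb1 : ‖b‖ < 1)
    (hγ1 : ‖a * b‖ < ‖γ‖)
    (hγ2 : ‖γ‖ < min (‖a‖) (‖b‖))
    (ζ₁ : ℂ) (hζ₁ : ζ₁ ^ 2 = γ * a / b) :
    lempert bidisk 2 (fun j => if j = 0 then ((a, 0) : ℂ × ℂ) else (b, 0)) (fun _ => 1)
        ((0 : ℂ), γ) = ((Real.log (‖γ‖) : ℝ) : EReal) ∧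
      DifferentiableOn ℂ
        (fun ζ => ((a / ζ₁ * ζ,
          (ζ - ζ₁) / (1 - (starRingEnd ℂ ζ₁) * ζ) *
            ((ζ - γ / ζ₁) / (1 - (starRingEnd ℂ (γ / ζ₁)) * ζ))) : ℂ × ℂ))
        (Metric.ball 0 1) ∧
      Set.MapsTo
        (fun ζ => ((a / ζ₁ * ζ,
          (ζ - ζ₁) / (1 - (starRingEnd ℂ ζ₁) * ζ) *
            ((ζ - γ / ζ₁) / (1 - (starRingEnd ℂ (γ / ζ₁)) * ζ))) : ℂ × ℂ))
        (Metric.ball 0 1) bidisk ∧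
      ζ₁ ∈ Metric.ball (0 : ℂ) 1 ∧ γ / ζ₁ ∈ Metric.ball (0 : ℂ) 1 ∧
      (fun ζ => ((a / ζ₁ * ζ,
          (ζ - ζ₁) / (1 - (starRingEnd ℂ ζ₁) * ζ) *
            ((ζ - γ / ζ₁) / (1 - (starRingEnd ℂ (γ / ζ₁)) * ζ))) : ℂ × ℂ)) 0
        = ((0 : ℂ), γ) ∧
      (fun ζ => ((a / ζ₁ * ζ,
          (ζ - ζ₁) / (1 - (starRingEnd ℂ ζ₁) * ζ) *
            ((ζ - γ / ζ₁) / (1 - (starRingEnd ℂ (γ / ζ₁)) * ζ))) : ℂ × ℂ)) ζ₁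
        = ((a, 0) : ℂ × ℂ) ∧
      (fun ζ => ((a / ζ₁ * ζ,
          (ζ - ζ₁) / (1 - (starRingEnd ℂ ζ₁) * ζ) *
            ((ζ - γ / ζ₁) / (1 - (starRingEnd ℂ (γ / ζ₁)) * ζ))) : ℂ × ℂ)) (γ / ζ₁)
        = ((b, 0) : ℂ × ℂ) ∧
      Real.log (‖ζ₁‖) + Real.log (‖γ / ζ₁‖) =
        Real.log (‖γ‖) :=
  statement16_general a b γ hab ha1 hb1 hγ1 hγ2 ζ₁ hζ₁
end
end
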